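/- arXiv:2203.10501 — 5 statements merged into one kernel-verified Lean document; each statement's English description precedes it below -/
import Mathlib

section
/- Let γ₀ and γ₁ be density operators on a finite-dimensional Hilbert space with γ₀ positive definite, and let O be a Hermitian operator. Define O_c = O − Tr(Oγ₀)·I and ξ = sign(Tr(Oγ₁) − Tr(Oγ₀)). Then for every s > 0, |Tr(γ₁O) − Tr(γ₀O)| ≤ (1/s)·[ln Tr(exp(ξ s O_c + ln γ₀)) + S(γ₁‖γ₀)], where S(γ₁‖γ₀) = Tr(γ₁ ln γ₁) − Tr(γ₁ ln γ₀) is the quantum relative entropy. -/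
open Matrix ComplexOrder

/-!
Gibbs variational principle: for a density matrix `ρ` and a Hermitian `H`,
`Re Tr(ρ H) ≤ ln Tr(exp H) + Tr(ρ ln ρ)`. In the eigenbases `uᵢ` of `ρ` and `vⱼ` of `H`,
`Tr(ρ g(H)) = ∑ᵢⱼ pᵢⱼ aᵢ g(bⱼ)` with `pᵢⱼ = |⟨uᵢ, vⱼ⟩|²` doubly stochastic, so the principle
reduces to Klein's scalar inequality `x ln y - x ln x ≤ y - x` applied to `x = aᵢ` and the Gibbs
weights `y = exp bⱼ / Z`, summed against `pᵢⱼ`.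

For `ρ = γ₁` and `H = ξ s O_c + ln γ₀` one has
`Re Tr(γ₁ H) = s |Tr(γ₁ O) - Tr(γ₀ O)| + Tr(γ₁ ln γ₀)`, because `ξ` is the sign of the
difference; dividing by `s` gives the inequality.
-/

lemma Real.mul_log_sub_mul_log_le {x y : ℝ} (hx : 0 ≤ x) (hy : 0 < y) :
    x * Real.log y - x * Real.log x ≤ y - x := by
  rcases hx.eq_or_lt with rfl | hx
  · simpa using hy.le
  · have h := mul_le_mul_of_nonneg_left (Real.log_le_sub_one_of_pos (div_pos hy hx)) hx.le
    rw [Real.log_div hy.ne' hx.ne', mul_sub, mul_sub, mul_div_cancel₀ _ hx.ne', mul_one] at h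
    exact h

open Finset in
lemma Real.sum_mul_mul_le_log_sum_exp_add {d : Type*} [Fintype d] [DecidableEq d] [Nonempty d]
    {p : Matrix d d ℝ} (hp : p ∈ doublyStochastic ℝ d) {a : d → ℝ} (ha : ∀ i, 0 ≤ a i)
    (ha₁ : ∑ i, a i = 1) (b : d → ℝ) :
    ∑ i, ∑ j, p i j * (a i * b j) ≤
      Real.log (∑ j, Real.exp (b j)) + ∑ i, a i * Real.log (a i) := by
  obtain ⟨hp₀, hrow, hcol⟩ := mem_doublyStochastic_iff_sum.mp hp
  have sum_row (c : d → ℝ) : ∑ i, ∑ j, p i j * c i = ∑ i, c i := by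
    simp only [← sum_mul, hrow, one_mul]
  have sum_col (c : d → ℝ) : ∑ i, ∑ j, p i j * c j = ∑ j, c j := by
    rw [sum_comm]; simp only [← sum_mul, hcol, one_mul]
  set Z := ∑ j, Real.exp (b j)
  have hZ : 0 < Z := sum_pos (fun j _ => Real.exp_pos _) univ_nonempty
  have pointwise (i j : d) : a i * b j ≤
      a i * Real.log (a i) + a i * Real.log Z + (Real.exp (b j) / Z - a i) := by
    have h := Real.mul_log_sub_mul_log_le (ha i) (div_pos (Real.exp_pos (b j)) hZ)
    rw [Real.log_div (Real.exp_ne_zero _) hZ.ne', Real.log_exp] at h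
    linarith
  calc ∑ i, ∑ j, p i j * (a i * b j)
      ≤ ∑ i, ∑ j, p i j *
          (a i * Real.log (a i) + a i * Real.log Z + (Real.exp (b j) / Z - a i)) :=
        sum_le_sum fun i _ => sum_le_sum fun j _ =>
          mul_le_mul_of_nonneg_left (pointwise i j) (hp₀ i j)
    _ = ∑ i, a i * Real.log (a i) + ∑ i, a i * Real.log Z +
          (∑ j, Real.exp (b j) / Z - ∑ i, a i) := by
        simp only [mul_add, mul_sub, sum_add_distrib, sum_sub_distrib, sum_row, sum_col]
    _ = Real.log Z + ∑ i, a i * Real.log (a i) := by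
        rw [← sum_mul, ← sum_div, ha₁, div_self hZ.ne']
        ring

namespace Matrix

variable {d : Type*} [Fintype d]

lemma IsHermitian.isSelfAdjoint_trace_mul {A B : Matrix d d ℂ} (hA : A.IsHermitian)
    (hB : B.IsHermitian) : IsSelfAdjoint (A * B).trace := by
  rw [IsSelfAdjoint, ← trace_conjTranspose, conjTranspose_mul, hA.eq, hB.eq,
    Matrix.trace_mul_comm]

variable [DecidableEq d]

lemma trace_diagonal_mul_mul_diagonal_mul_conjTranspose (a b : d → ℂ) (W : Matrix d d ℂ) :
    (diagonal a * (W * diagonal b * Wᴴ)).trace =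
      ∑ i, ∑ j, (Complex.normSq (W i j) : ℂ) * (a i * b j) := by
  refine Finset.sum_congr rfl fun i _ => ?_
  rw [diag_apply, diagonal_mul, mul_apply, Finset.mul_sum]
  refine Finset.sum_congr rfl fun j _ => ?_
  rw [mul_diagonal, conjTranspose_apply, Complex.star_def, Complex.normSq_eq_conj_mul_self]
  ring

lemma map_normSq_mem_doublyStochastic {W : Matrix d d ℂ} (hW : W ∈ unitaryGroup d ℂ) :
    W.map Complex.normSq ∈ doublyStochastic ℝ d := by
  refine mem_doublyStochastic_iff_sum.mpr
    ⟨fun i j => Complex.normSq_nonneg _, fun i => ?_, fun j => ?_⟩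
  · have h := congrFun (congrFun (mem_unitaryGroup_iff.mp hW) i) i
    simp only [star_eq_conjTranspose, mul_apply, conjTranspose_apply, Complex.star_def,
      Complex.mul_conj, one_apply_eq] at h
    exact_mod_cast h
  · have h := congrFun (congrFun (mem_unitaryGroup_iff'.mp hW) j) j
    simp only [star_eq_conjTranspose, mul_apply, conjTranspose_apply, Complex.star_def,
      ← Complex.normSq_eq_conj_mul_self, one_apply_eq] at h
    exact_mod_cast h

namespace IsHermitian

variable {A B : Matrix d d ℂ}

lemma trace_cfc (hB : B.IsHermitian) (g : ℝ → ℝ) :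
    (cfc g B).trace = ((∑ j, g (hB.eigenvalues j) : ℝ) : ℂ) := by
  rw [hB.cfc_eq, IsHermitian.cfc, Unitary.conjStarAlgAut_apply, trace_mul_cycle,
    Unitary.coe_star_mul_self, one_mul, trace_diagonal]
  simp

lemma trace_mul_cfc_self (hA : A.IsHermitian) (g : ℝ → ℝ) :
    (A * cfc g A).trace = ((∑ i, hA.eigenvalues i * g (hA.eigenvalues i) : ℝ) : ℂ) := by
  have hcont {f : ℝ → ℝ} : ContinuousOn f (spectrum ℝ A) := A.finite_real_spectrum.continuousOn f
  have hmul : A * cfc g A = cfc (fun x => x * g x) A := by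
    rw [cfc_mul (fun x => x) g A hcont hcont, cfc_id' ℝ A]
  rw [hmul, hA.trace_cfc]

-- `NormedSpace.exp` only depends on the topology, so any matrix norm may be used here.
lemma exp_eq_cfc_exp (hA : A.IsHermitian) : NormedSpace.exp A = cfc Real.exp A :=
  (@CFC.real_exp_eq_normedSpace_exp _ Matrix.linftyOpNormedRing _ Matrix.linftyOpNormedAlgebra
    instContinuousFunctionalCalculus A hA).symm

lemma exists_doublyStochastic_trace_mul_cfc (hA : A.IsHermitian) (hB : B.IsHermitian) :
    ∃ p ∈ doublyStochastic ℝ d, ∀ g : ℝ → ℝ, (A * cfc g B).trace =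
      ((∑ i, ∑ j, p i j * (hA.eigenvalues i * g (hB.eigenvalues j)) : ℝ) : ℂ) := by
  set U : Matrix d d ℂ := (hA.eigenvectorUnitary : Matrix d d ℂ)
  set V : Matrix d d ℂ := (hB.eigenvectorUnitary : Matrix d d ℂ)
  have hW : star U * V ∈ unitaryGroup d ℂ :=
    mul_mem (Unitary.star_mem hA.eigenvectorUnitary.2) hB.eigenvectorUnitary.2
  refine ⟨_, map_normSq_mem_doublyStochastic hW, fun g => ?_⟩
  have hWH : (star U * V)ᴴ = star V * U := by
    rw [conjTranspose_mul, ← star_eq_conjTranspose, ← star_eq_conjTranspose, star_star]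
  have htrace : (A * cfc g B).trace = (diagonal (RCLike.ofReal ∘ hA.eigenvalues) *
      (star U * V * diagonal (RCLike.ofReal ∘ g ∘ hB.eigenvalues) * (star U * V)ᴴ)).trace := by
    conv_lhs => rw [hA.spectral_theorem, hB.cfc_eq, IsHermitian.cfc]
    rw [Unitary.conjStarAlgAut_apply, Unitary.conjStarAlgAut_apply, hWH]
    simp only [mul_assoc]
    exact (Matrix.trace_mul_comm U _).trans (by simp only [mul_assoc]; rfl)
  rw [htrace, trace_diagonal_mul_mul_diagonal_mul_conjTranspose]
  push_cast
  rfl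

end IsHermitian

theorem PosSemidef.re_trace_mul_le_log_re_trace_exp_add {ρ H : Matrix d d ℂ}
    (hρ : ρ.PosSemidef) (hρ₁ : ρ.trace = 1) (hH : H.IsHermitian) :
    (ρ * H).trace.re ≤
      Real.log (NormedSpace.exp H).trace.re + (ρ * cfc Real.log ρ).trace.re := by
  have : Nonempty d := by
    by_contra h
    rw [not_nonempty_iff] at h
    simp at hρ₁
  have hsum : ∑ i, hρ.1.eigenvalues i = 1 := by
    have h := hρ.1.trace_eq_sum_eigenvalues
    rw [hρ₁] at h
    simpa using congrArg Complex.re h.symm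
  obtain ⟨p, hp, htrace⟩ := hρ.1.exists_doublyStochastic_trace_mul_cfc hH
  have hρH := htrace id
  rw [cfc_id ℝ H] at hρH
  rw [hρH, hH.exp_eq_cfc_exp, hH.trace_cfc, hρ.1.trace_mul_cfc_self]
  simp only [Complex.ofReal_re]
  exact Real.sum_mul_mul_le_log_sum_exp_add hp hρ.eigenvalues_nonneg hsum _

end Matrix

lemma Real.sign_mul_self_eq_abs (x : ℝ) : Real.sign x * x = |x| := by
  rcases lt_trichotomy x 0 with h | rfl | h
  · rw [Real.sign_of_neg h, abs_of_neg h, neg_one_mul]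
  · simp
  · rw [Real.sign_of_pos h, abs_of_pos h, one_mul]

theorem qfri_general {d : Type*} [Fintype d] [DecidableEq d]
    (γ₀ γ₁ O : Matrix d d ℂ)
    (hγ₀ : γ₀.PosDef)
    (hγ₁ : γ₁.PosSemidef) (hγ₁tr : γ₁.trace = 1)
    (hO : O.IsHermitian)
    (Oc : Matrix d d ℂ) (hOc : Oc = O - ((O * γ₀).trace) • 1)
    (ξ : ℝ) (hξ : ξ = Real.sign (((O * γ₁).trace).re - ((O * γ₀).trace).re))
    (s : ℝ) (hs : 0 < s) :
    |((γ₁ * O).trace).re - ((γ₀ * O).trace).re| ≤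
      (1 / s) *
        (Real.log (((NormedSpace.exp ((((ξ * s : ℝ) : ℂ)) • Oc + cfc Real.log γ₀)).trace).re)
          + ((γ₁ * cfc Real.log γ₁).trace - (γ₁ * cfc Real.log γ₀).trace).re) := by
  have hc : star (O * γ₀).trace = (O * γ₀).trace := (hO.isSelfAdjoint_trace_mul hγ₀.1).star_eq
  have hH : ((((ξ * s : ℝ) : ℂ)) • Oc + cfc Real.log γ₀).IsHermitian := by
    refine IsHermitian.add (IsHermitian.smul ?_ (Complex.conj_ofReal _)) (cfc_predicate _ _)
    exact hOc ▸ hO.sub (isHermitian_one.smul hc)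
  have hgibbs := hγ₁.re_trace_mul_le_log_re_trace_exp_add hγ₁tr hH
  rw [Matrix.trace_mul_comm γ₁ O, Matrix.trace_mul_comm γ₀ O]
  set Δ := ((O * γ₁).trace).re - ((O * γ₀).trace).re
  have hlin : ((γ₁ * ((((ξ * s : ℝ) : ℂ)) • Oc + cfc Real.log γ₀)).trace).re =
      ξ * s * Δ + ((γ₁ * cfc Real.log γ₀).trace).re := by
    rw [hOc, Matrix.mul_add, trace_add, Matrix.mul_smul, trace_smul, Matrix.mul_sub, trace_sub,
      Matrix.mul_smul, Matrix.mul_one, trace_smul, hγ₁tr, Matrix.trace_mul_comm γ₁ O]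
    simp [Δ]
  have hξΔ : ξ * Δ = |Δ| := hξ ▸ Real.sign_mul_self_eq_abs Δ
  have hsξΔ : ξ * s * Δ = s * |Δ| := by rw [← hξΔ]; ring
  rw [one_div, le_inv_mul_iff₀ hs, Complex.sub_re]
  linarith

/-- Quantum fluctuation-response inequality (QFRI). -/
theorem qfri {d : Type*} [Fintype d] [DecidableEq d]
    (γ₀ γ₁ O : Matrix d d ℂ)
    (hγ₀ : γ₀.PosDef) (hγ₀tr : γ₀.trace = 1)
    (hγ₁ : γ₁.PosSemidef) (hγ₁tr : γ₁.trace = 1)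
    (hO : O.IsHermitian)
    (Oc : Matrix d d ℂ) (hOc : Oc = O - ((O * γ₀).trace) • 1)
    (ξ : ℝ) (hξ : ξ = Real.sign (((O * γ₁).trace).re - ((O * γ₀).trace).re))
    (s : ℝ) (hs : 0 < s) :
    |((γ₁ * O).trace).re - ((γ₀ * O).trace).re| ≤
      (1 / s) *
        (Real.log (((NormedSpace.exp ((((ξ * s : ℝ) : ℂ)) • Oc + cfc Real.log γ₀)).trace).re)
          + ((γ₁ * cfc Real.log γ₁).trace - (γ₁ * cfc Real.log γ₀).trace).re) :=
  qfri_general γ₀ γ₁ O hγ₀ hγ₁ hγ₁tr hO Oc hOc ξ hξ s hs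
end

section
/- (Klein's inequality for the exponential) Let A and B be Hermitian matrices of the same size. Then Tr(e^B) ≥ Tr(e^A) + Tr(e^A(B − A)). -/
/-!
Diagonalise `A = U diag(a) U*` and `B = V diag(b) V*`. For all real functions `φ, ψ`,
`Tr(φ(A) ψ(B)) = ∑ i j, φ(aᵢ) ψ(bⱼ) |(U* V)ᵢⱼ|²`, with the same nonnegative weights for every
`φ, ψ`. Writing `f(A) = f(A)·1(B)`, `f(B) = 1(A)·f(B)`, `B = id(B)` and `g(A) A = (g·id)(A)`, all
four traces in Klein's inequality take this form, and the inequality reduces, weight by weight,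
to the tangent-line inequality `f(a) + g(a)(b - a) ≤ f(b)`; for `f = g = exp` this is
`eᵃ(1 + (b - a)) ≤ eᵃ e^(b - a)`.
-/

open Matrix

theorem Real.exp_add_exp_mul_sub_le (x y : ℝ) : exp x + exp x * (y - x) ≤ exp y :=
  calc exp x + exp x * (y - x) = exp x * (y - x + 1) := by ring
    _ ≤ exp x * exp (y - x) := by gcongr; exact add_one_le_exp _
    _ = exp y := by rw [← exp_add, add_sub_cancel]

namespace Matrix

variable {n 𝕜 : Type*} [RCLike 𝕜] [Fintype n] [DecidableEq n]

theorem trace_diagonal_mul_mul_diagonal_mul_star (d e : n → ℝ) (W : Matrix n n 𝕜) :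
    (diagonal (RCLike.ofReal ∘ d) * W * diagonal (RCLike.ofReal ∘ e) * star W).trace =
      ((∑ i, ∑ j, d i * e j * ‖W i j‖ ^ 2 : ℝ) : 𝕜) := by
  simp only [trace, diag_apply, mul_apply (N := star W), mul_diagonal, diagonal_mul, star_apply,
    Function.comp_apply, RCLike.ofReal_sum, RCLike.ofReal_mul, RCLike.ofReal_pow]
  refine Finset.sum_congr rfl fun i _ => Finset.sum_congr rfl fun j _ => ?_
  rw [← RCLike.mul_conj, RCLike.star_def]
  ring

theorem IsHermitian.trace_cfc_mul_cfc {A B : Matrix n n 𝕜} (hA : A.IsHermitian)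
    (hB : B.IsHermitian) (f g : ℝ → ℝ) :
    (cfc f A * cfc g B).trace =
      ((∑ i, ∑ j, f (hA.eigenvalues i) * g (hB.eigenvalues j) *
        ‖(star (hA.eigenvectorUnitary : Matrix n n 𝕜) * hB.eigenvectorUnitary) i j‖ ^ 2 : ℝ) : 𝕜) := by
  refine .trans ?_ (trace_diagonal_mul_mul_diagonal_mul_star (f ∘ hA.eigenvalues)
    (g ∘ hB.eigenvalues) _)
  rw [hA.cfc_eq, hB.cfc_eq, IsHermitian.cfc, IsHermitian.cfc, Unitary.conjStarAlgAut_apply,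
    Unitary.conjStarAlgAut_apply]
  simp only [star_mul, star_star, mul_assoc]
  rw [trace_mul_comm]
  simp only [mul_assoc]

theorem IsHermitian.klein_inequality {A B : Matrix n n 𝕜} (hA : A.IsHermitian)
    (hB : B.IsHermitian) {f g : ℝ → ℝ} (hfg : ∀ x y, f x + g x * (y - x) ≤ f y) :
    RCLike.re (cfc f A).trace + RCLike.re (cfc g A * (B - A)).trace ≤
      RCLike.re (cfc f B).trace := by
  obtain ⟨P, hP, re_trace⟩ : ∃ P : n → n → ℝ, (∀ i j, 0 ≤ P i j) ∧ ∀ φ ψ : ℝ → ℝ,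
      RCLike.re (cfc φ A * cfc ψ B).trace =
        ∑ i, ∑ j, φ (hA.eigenvalues i) * ψ (hB.eigenvalues j) * P i j :=
    ⟨_, fun i j => sq_nonneg _, fun φ ψ => by rw [hA.trace_cfc_mul_cfc hB, RCLike.ofReal_re]⟩
  have hfA := re_trace f fun _ => 1
  have hfB := re_trace (fun _ => 1) f
  have hgB := re_trace g fun x => x
  have hgA := re_trace (fun x => g x * x) fun _ => 1
  rw [cfc_const_one ℝ B, mul_one] at hfA
  rw [cfc_const_one ℝ A, one_mul] at hfB
  rw [cfc_id' ℝ B] at hgB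
  rw [cfc_const_one ℝ B, mul_one, cfc_mul g (fun x => x) A (A.finite_real_spectrum.continuousOn g)
    (A.finite_real_spectrum.continuousOn _), cfc_id' ℝ A] at hgA
  rw [mul_sub, trace_sub, map_sub, hfA, hfB, hgA, hgB, ← Finset.sum_sub_distrib,
    ← Finset.sum_add_distrib]
  refine Finset.sum_le_sum fun i _ => ?_
  rw [← Finset.sum_sub_distrib, ← Finset.sum_add_distrib]
  refine Finset.sum_le_sum fun j _ => ?_
  linear_combination mul_le_mul_of_nonneg_right (hfg (hA.eigenvalues i) (hB.eigenvalues j)) (hP i j)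

-- `NormedSpace.exp` depends only on the topology, so any algebra norm inducing it will do.
open scoped Matrix.Norms.L2Operator in
theorem IsHermitian.exp_eq_cfc {A : Matrix n n 𝕜} (hA : A.IsHermitian) :
    NormedSpace.exp A = cfc Real.exp A :=
  letI : NormedAlgebra ℝ (Matrix n n 𝕜) :=
    { norm_smul_le r x := by rw [← algebraMap_smul 𝕜 r x, norm_smul, norm_algebraMap'] }
  (CFC.real_exp_eq_normedSpace_exp hA.isSelfAdjoint).symm

end Matrix

/-- Klein's inequality for the exponential function. -/
theorem klein_exp {d : Type*} [Fintype d] [DecidableEq d]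
    (A B : Matrix d d ℂ) (hA : A.IsHermitian) (hB : B.IsHermitian) :
    ((NormedSpace.exp B).trace).re ≥
      ((NormedSpace.exp A).trace).re + ((NormedSpace.exp A * (B - A)).trace).re := by
  rw [hA.exp_eq_cfc, hB.exp_eq_cfc]
  exact hA.klein_inequality hB Real.exp_add_exp_mul_sub_le
end

section
/- Let Y be a Bernoulli(α) random variable with α ∈ (0,1), α ≠ 1/2. Then the sub-Gaussian norm of Y equals σ₀ = √((α − 1/2)/ln(α/(1−α))), i.e., E[exp(t(Y − α))] ≤ exp(σ₀² t²/2) for all t ∈ ℝ, and σ₀² is the infimum of all σ² for which this holds. Moreover σ₀ < 1/2. -/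
/-!
Write `α = (1 - tanh a) / 2`. Then the centred moment generating function of `Y` is
`exp (t tanh a / 2) cosh (t / 2 - a) / cosh a`, and the bound `exp (σ₀² t² / 2)` with
`σ₀² = tanh a / (4 a)` becomes `log cosh s ≤ log cosh a + tanh a / (2 a) * (s² - a²)` for
`s = t / 2 - a`, with equality at `s = a`, i.e. `t = 4 a`, which pins down the infimum.
That inequality holds because the difference of its two sides is even in `s`, vanishes at `a`, and
has derivative `s (tanh a / a - tanh s / s)`, whose sign is that of `|s| - |a|` since
`tanh s / s` decreases on `(0, ∞)` by concavity of `tanh` there.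
Concavity also gives `tanh a / a < tanh' 0 = 1`, hence `σ₀ < 1 / 2`.
-/

open Real Set

namespace Real

theorem hasDerivAt_tanh (x : ℝ) : HasDerivAt tanh (1 / cosh x ^ 2) x := by
  have h : HasDerivAt (fun y => sinh y / cosh y)
      ((cosh x * cosh x - sinh x * sinh x) / cosh x ^ 2) x :=
    (hasDerivAt_sinh x).div (hasDerivAt_cosh x) (cosh_pos x).ne'
  rw [show tanh = fun y => sinh y / cosh y from funext tanh_eq_sinh_div_cosh]
  refine h.congr_deriv ?_
  rw [← sq, ← sq, cosh_sq]
  ring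

theorem strictConcaveOn_tanh : StrictConcaveOn ℝ (Ici 0) tanh := by
  refine StrictAntiOn.strictConcaveOn_of_deriv (convex_Ici 0)
    (fun x _ => (hasDerivAt_tanh x).continuousAt.continuousWithinAt) ?_
  rw [interior_Ici]
  intro x hx y hy hxy
  simp only [(hasDerivAt_tanh _).deriv]
  have : cosh x < cosh y := cosh_lt_cosh.2 (by rwa [abs_of_pos hx, abs_of_pos hy])
  gcongr

theorem tanh_div_self_strictAntiOn : StrictAntiOn (fun x => tanh x / x) (Ioi 0) := by
  intro x hx y hy hxy
  simpa using strictConcaveOn_tanh.secant_strict_mono self_mem_Ici (mem_Ici.2 (le_of_lt hx))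
    (mem_Ici.2 (le_of_lt hy)) (ne_of_gt hx) (ne_of_gt hy) hxy

theorem tanh_div_self_pos {x : ℝ} (hx : x ≠ 0) : 0 < tanh x / x := by
  rw [tanh_eq_sinh_div_cosh]
  rcases hx.lt_or_gt with hx | hx
  · exact div_pos_of_neg_of_neg (div_neg_of_neg_of_pos (sinh_neg_iff.2 hx) (cosh_pos x)) hx
  · exact div_pos (div_pos (sinh_pos_iff.2 hx) (cosh_pos x)) hx

theorem tanh_div_self_lt_one {x : ℝ} (hx : x ≠ 0) : tanh x / x < 1 := by
  wlog hpos : 0 < x generalizing x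
  · simpa [tanh_neg, neg_div_neg_eq] using
      this (neg_ne_zero.2 hx) (neg_pos.2 (lt_of_le_of_ne (not_lt.1 hpos) hx))
  simpa [slope_def_field] using strictConcaveOn_tanh.slope_lt_of_hasDerivAt self_mem_Ici
    (le_of_lt hpos) hpos (hasDerivAt_tanh 0)

theorem log_div_one_sub_eq_neg_two_mul_artanh {α : ℝ} (h0 : 0 < α) (h1 : α < 1) :
    log (α / (1 - α)) = -2 * artanh (1 - 2 * α) := by
  have h : (1 + (1 - 2 * α)) / (1 - (1 - 2 * α)) = (α / (1 - α))⁻¹ := by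
    field_simp
    ring
  rw [artanh_eq_half_log ⟨by linarith, by linarith⟩, h, log_inv]
  ring

theorem log_cosh_le_of_pos {a : ℝ} (ha : 0 < a) (s : ℝ) :
    log (cosh s) ≤ log (cosh a) + tanh a / (2 * a) * (s ^ 2 - a ^ 2) := by
  set f : ℝ → ℝ := fun x => log (cosh a) + tanh a / (2 * a) * (x ^ 2 - a ^ 2) - log (cosh x)
  have hf (x : ℝ) : HasDerivAt f (x * (tanh a / a) - tanh x) x := by
    have h := (((hasDerivAt_pow 2 x).sub_const (a ^ 2)).const_mul (tanh a / (2 * a))).const_add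
      (log (cosh a)) |>.sub ((hasDerivAt_cosh x).log (cosh_pos x).ne')
    refine h.congr_deriv ?_
    rw [tanh_eq_sinh_div_cosh x]
    field_simp
    ring
  have hf_cont : ContinuousOn f univ := fun x _ => (hf x).continuousAt.continuousWithinAt
  have hf'_sign {x : ℝ} (hx : 0 < x) :
      x * (tanh a / a) - tanh x = x * (tanh a / a - tanh x / x) := by
    field_simp
  have hanti : AntitoneOn f (Icc 0 a) := by
    refine antitoneOn_of_hasDerivWithinAt_nonpos (convex_Icc 0 a) (hf_cont.mono (subset_univ _))
      (fun x _ => (hf x).hasDerivWithinAt) fun x hx => ?_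
    rw [interior_Icc] at hx
    rw [hf'_sign hx.1]
    exact mul_nonpos_of_nonneg_of_nonpos hx.1.le
      (sub_nonpos.2 (tanh_div_self_strictAntiOn hx.1 ha hx.2).le)
  have hmono : MonotoneOn f (Ici a) := by
    refine monotoneOn_of_hasDerivWithinAt_nonneg (convex_Ici a) (hf_cont.mono (subset_univ _))
      (fun x _ => (hf x).hasDerivWithinAt) fun x hx => ?_
    rw [interior_Ici] at hx
    rw [hf'_sign (ha.trans hx)]
    exact mul_nonneg (ha.trans hx).le
      (sub_nonneg.2 (tanh_div_self_strictAntiOn ha (ha.trans hx) hx).le)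
  have hfa : f a = 0 := by simp [f]
  have key : 0 ≤ f |s| := by
    rcases le_total |s| a with h | h
    · exact hfa ▸ hanti ⟨abs_nonneg s, h⟩ ⟨ha.le, le_rfl⟩ h
    · exact hfa ▸ hmono self_mem_Ici h h
  simp only [f, cosh_abs, sq_abs] at key
  linarith

theorem log_cosh_le {a : ℝ} (ha : a ≠ 0) (s : ℝ) :
    log (cosh s) ≤ log (cosh a) + tanh a / (2 * a) * (s ^ 2 - a ^ 2) := by
  rcases ha.lt_or_gt with hneg | hpos
  · simpa [tanh_neg, neg_div_neg_eq] using log_cosh_le_of_pos (neg_pos.2 hneg) s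
  · exact log_cosh_le_of_pos hpos s

end Real

theorem bernoulli_mgf_eq_of_tanh_eq {α a : ℝ} (hα : tanh a = 1 - 2 * α) (t : ℝ) :
    (1 - α) * exp (t * (0 - α)) + α * exp (t * (1 - α)) =
      exp (tanh a * t / 2) * cosh (t / 2 - a) / cosh a := by
  obtain rfl : α = (1 - sinh a / cosh a) / 2 := by rw [← tanh_eq_sinh_div_cosh]; linarith
  rw [show t * (0 - (1 - sinh a / cosh a) / 2) = tanh a * t / 2 + -(t / 2) by
      rw [tanh_eq_sinh_div_cosh]; ring,
    show t * (1 - (1 - sinh a / cosh a) / 2) = tanh a * t / 2 + t / 2 by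
      rw [tanh_eq_sinh_div_cosh]; ring,
    exp_add, exp_add, cosh_sub, cosh_eq (t / 2), sinh_eq (t / 2)]
  field_simp
  ring

theorem bernoulli_mgf_le_of_tanh_eq {α a : ℝ} (ha : a ≠ 0) (hα : tanh a = 1 - 2 * α)
    (t : ℝ) :
    (1 - α) * exp (t * (0 - α)) + α * exp (t * (1 - α)) ≤
      exp (tanh a / (4 * a) * t ^ 2 / 2) := by
  rw [bernoulli_mgf_eq_of_tanh_eq hα, ← exp_log (cosh_pos (t / 2 - a)), ← exp_log (cosh_pos a),
    ← exp_add, ← exp_sub, exp_le_exp]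
  have h := log_cosh_le ha (t / 2 - a)
  have hk : tanh a / (2 * a) * ((t / 2 - a) ^ 2 - a ^ 2) =
      tanh a / (4 * a) * t ^ 2 / 2 - tanh a * t / 2 := by
    field_simp
    ring
  linarith

theorem bernoulli_mgf_four_mul_eq_of_tanh_eq {α a : ℝ} (ha : a ≠ 0)
    (hα : tanh a = 1 - 2 * α) :
    (1 - α) * exp (4 * a * (0 - α)) + α * exp (4 * a * (1 - α)) =
      exp (tanh a / (4 * a) * (4 * a) ^ 2 / 2) := by
  rw [bernoulli_mgf_eq_of_tanh_eq hα, show 4 * a / 2 - a = a by ring,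
    mul_div_cancel_right₀ _ (cosh_pos a).ne']
  congr 1
  field_simp

theorem isLeast_subGaussian_proxy_of_attained {M : ℝ → ℝ} {v₀ t₀ : ℝ} (hv₀ : 0 ≤ v₀)
    (hle : ∀ t, M t ≤ exp (v₀ * t ^ 2 / 2)) (ht₀ : t₀ ≠ 0)
    (heq : M t₀ = exp (v₀ * t₀ ^ 2 / 2)) :
    IsLeast {v | 0 ≤ v ∧ ∀ t, M t ≤ exp (v * t ^ 2 / 2)} v₀ := by
  refine ⟨⟨hv₀, hle⟩, fun v ⟨_, hv⟩ => ?_⟩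
  have h := hv t₀
  rw [heq, exp_le_exp] at h
  have ht₀2 : 0 < t₀ ^ 2 / 2 := by positivity
  nlinarith

/-- The sub-Gaussian norm of a Bernoulli(α) random variable equals
√((α − 1/2)/ln(α/(1−α))), and is strictly less than 1/2. -/
theorem bernoulli_subgaussian_norm (α : ℝ) (hα : α ∈ Set.Ioo (0:ℝ) 1) (hα2 : α ≠ 1/2)
    (σ₀ : ℝ) (hσ₀ : σ₀ = Real.sqrt ((α - 1/2) / Real.log (α / (1 - α)))) :
    (∀ t : ℝ, (1 - α) * Real.exp (t * (0 - α)) + α * Real.exp (t * (1 - α))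
        ≤ Real.exp (σ₀ ^ 2 * t ^ 2 / 2)) ∧
    σ₀ ^ 2 = sInf {v : ℝ | 0 ≤ v ∧ ∀ t : ℝ,
        (1 - α) * Real.exp (t * (0 - α)) + α * Real.exp (t * (1 - α))
          ≤ Real.exp (v * t ^ 2 / 2)} ∧
    σ₀ < 1/2 := by
  obtain ⟨hα0, hα1⟩ := hα
  set a := artanh (1 - 2 * α)
  have htanh : tanh a = 1 - 2 * α := tanh_artanh ⟨by linarith, by linarith⟩
  have ha : a ≠ 0 := fun h => hα2 (by rw [h, tanh_zero] at htanh; linarith)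
  have hlog : log (α / (1 - α)) = -2 * a := log_div_one_sub_eq_neg_two_mul_artanh hα0 hα1
  have hσ₀' : σ₀ = sqrt (tanh a / (4 * a)) := by
    rw [hσ₀, hlog, htanh]
    congr 1
    field_simp
    ring
  have hv₀_eq : tanh a / (4 * a) = tanh a / a / 4 := by ring
  have hv₀ : 0 < tanh a / (4 * a) := hv₀_eq ▸ div_pos (tanh_div_self_pos ha) four_pos
  have hσ₀sq : σ₀ ^ 2 = tanh a / (4 * a) := by rw [hσ₀', sq_sqrt hv₀.le]
  rw [hσ₀sq]
  refine ⟨bernoulli_mgf_le_of_tanh_eq ha htanh, ?_, ?_⟩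
  · exact ((isLeast_subGaussian_proxy_of_attained hv₀.le (bernoulli_mgf_le_of_tanh_eq ha htanh)
      (mul_ne_zero four_ne_zero ha) (bernoulli_mgf_four_mul_eq_of_tanh_eq ha htanh)).csInf_eq).symm
  · rw [hσ₀', sqrt_lt' one_half_pos, hv₀_eq]
    linarith [tanh_div_self_lt_one ha]
end

section
/- Let γ₀ be a positive-definite density operator and O a Hermitian operator on a finite-dimensional Hilbert space, with O_c = O − Tr(Oγ₀)·I having eigenvalues {o_i}. Let P be the probability distribution assigning probability p_i = ⟨i|γ₀|i⟩ to o_i in an eigenbasis {|i⟩} of O_c. If the random variable O_c under P is sub-Gaussian with norm σ, then |Tr(γ₁O) − Tr(γ₀O)| ≤ σ·√(2 S(γ₁‖γ₀)) for any density operator γ₁. -/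
/-!
Write `O_c = U diag(o) U*` and let `q_i = ⟨u_i|γ₁|u_i⟩`, `p_i = ⟨u_i|γ₀|u_i⟩`. Then
`Tr(γ₁O) - Tr(γ₀O) = Σ q_i o_i` and `Tr(γ₀ e^{tO_c}) = Σ p_i e^{t o_i}`, so Gibbs' variational
inequality and the sub-Gaussian bound give `t Σ q_i o_i ≤ D(q‖p) + σ²t²/2` for all `t`, whence
`|Σ q_i o_i| ≤ σ √(2 D(q‖p))`. It remains to show `D(q‖p) ≤ S(γ₁‖γ₀)`: dephasing does not increase
relative entropy. With `γ₁ = Σ ν_k |w_k⟩⟨w_k|`, `γ₀ = Σ g_j |v_j⟩⟨v_j|` and `c_kj = |⟨w_k|v_j⟩|²`,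
`S(γ₁‖γ₀) = Σ c_kj ν_k (log ν_k - log g_j)`. Both relative entropies are recovered from the
resolvent sums `Σ x²/(y + s x)` by integrating over `s ≥ 0`, so it suffices to compare those:
`Σ q_i²/(p_i + s q_i)` is the value of `2 Re Tr(Dγ₁) - Tr(D* γ₀ D) - s Tr(D* D γ₁)` at the optimal
`D` diagonal in the basis `u`, and in the eigenbases of `γ₁, γ₀` this quadratic form is bounded
termwise by `Σ c_kj ν_k²/(g_j + s ν_k)`.
-/

open Real Finset Filter Topology

theorem abs_le_mul_sqrt_of_forall_mul_le {m S σ : ℝ} (hσ : 0 ≤ σ)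
    (h : ∀ t : ℝ, t * m ≤ S + σ ^ 2 * t ^ 2 / 2) : |m| ≤ σ * √(2 * S) := by
  have hdiscrim : discrim (σ ^ 2 / 2) (-m) S ≤ 0 :=
    discrim_le_zero fun t => by nlinarith [h t]
  rw [discrim] at hdiscrim
  calc |m| = √(m ^ 2) := (sqrt_sq_eq_abs m).symm
    _ ≤ √(σ ^ 2 * (2 * S)) := sqrt_le_sqrt (by linarith)
    _ = σ * √(2 * S) := by rw [sqrt_mul (sq_nonneg σ), sqrt_sq hσ]

theorem mul_log_sub_log_le_sub {q r : ℝ} (hq : 0 ≤ q) (hr : 0 < r) :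
    q * (log r - log q) ≤ r - q := by
  rcases hq.eq_or_lt with rfl | hq
  · simpa using hr.le
  have h := log_le_sub_one_of_pos (div_pos hr hq)
  rw [log_div hr.ne' hq.ne'] at h
  calc q * (log r - log q) ≤ q * (r / q - 1) := by gcongr
    _ = r - q := by field_simp

theorem mul_sum_le_sum_mul_log_sub_add_log_sum_exp {ι : Type*} [Fintype ι] {q p : ι → ℝ}
    (hq : ∀ i, 0 ≤ q i) (hq1 : ∑ i, q i = 1) (hp : ∀ i, 0 < p i) (o : ι → ℝ) (t : ℝ) :
    t * ∑ i, q i * o i ≤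
      ∑ i, q i * (log (q i) - log (p i)) + log (∑ i, p i * exp (t * o i)) := by
  set Z := ∑ i, p i * exp (t * o i)
  have hpe : ∀ i, 0 < p i * exp (t * o i) := fun i => mul_pos (hp i) (exp_pos _)
  have hZ : 0 < Z := sum_pos (fun i _ => hpe i) (nonempty_of_sum_ne_zero (hq1 ▸ one_ne_zero))
  -- Gibbs' inequality against the tilted distribution `p_i e^{t o_i} / Z`.
  have hsum : ∑ i, q i * (log (p i * exp (t * o i) / Z) - log (q i)) ≤ 0 := by
    calc _ ≤ ∑ i, (p i * exp (t * o i) / Z - q i) :=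
          sum_le_sum fun i _ => mul_log_sub_log_le_sub (hq i) (div_pos (hpe i) hZ)
      _ = 0 := by rw [sum_sub_distrib, ← sum_div, div_self hZ.ne', hq1, sub_self]
  have hexpand : ∀ i, q i * (log (p i * exp (t * o i) / Z) - log (q i))
      = t * (q i * o i) - q i * (log (q i) - log (p i)) - q i * log Z := fun i => by
    rw [log_div (hpe i).ne' hZ.ne', log_mul (hp i).ne' (exp_pos _).ne', log_exp]
    ring
  simp only [hexpand, sum_sub_distrib, ← mul_sum, ← sum_mul, hq1] at hsum
  linarith

theorem abs_sum_mul_le_mul_sqrt_of_subGaussian {ι : Type*} [Fintype ι] {q p o : ι → ℝ}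
    {σ : ℝ} (hσ : 0 ≤ σ) (hq : ∀ i, 0 ≤ q i) (hq1 : ∑ i, q i = 1) (hp : ∀ i, 0 < p i)
    (hsub : ∀ t : ℝ, ∑ i, p i * exp (t * o i) ≤ exp (σ ^ 2 * t ^ 2 / 2)) :
    |∑ i, q i * o i| ≤ σ * √(2 * ∑ i, q i * (log (q i) - log (p i))) := by
  refine abs_le_mul_sqrt_of_forall_mul_le hσ fun t => ?_
  have hZ : 0 < ∑ i, p i * exp (t * o i) := sum_pos (fun i _ => mul_pos (hp i) (exp_pos _))
    (nonempty_of_sum_ne_zero (hq1 ▸ one_ne_zero))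
  calc t * ∑ i, q i * o i
      ≤ ∑ i, q i * (log (q i) - log (p i)) + log (∑ i, p i * exp (t * o i)) :=
        mul_sum_le_sum_mul_log_sub_add_log_sum_exp hq hq1 hp o t
    _ ≤ _ := by
        gcongr
        exact (log_le_log hZ (hsub t)).trans_eq (log_exp _)

section Resolvent

variable {κ ι : Type*} [Fintype κ] [Fintype ι] {c x y : κ → ℝ} {c' x' y' : ι → ℝ}

theorem hasDerivAt_sum_mul_log_add_mul (hx : ∀ b, 0 ≤ x b) (hy : ∀ b, 0 < y b) {T : ℝ}
    (hT : 0 ≤ T) :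
    HasDerivAt (fun T => ∑ b, c b * x b * (log (y b + T * x b) - log (x b)))
      (∑ b, c b * x b ^ 2 / (y b + T * x b)) T := by
  refine HasDerivAt.fun_sum fun b _ => ?_
  have hpos : y b + T * x b ≠ 0 := (add_pos_of_pos_of_nonneg (hy b) (mul_nonneg hT (hx b))).ne'
  have hlog := (((hasDerivAt_mul_const (x b)).const_add (y b)).log hpos).sub_const (log (x b))
  exact (hlog.const_mul (c b * x b)).congr_deriv (by ring)

theorem tendsto_sum_mul_log_add_mul_sub_log (hx : ∀ b, 0 ≤ x b) :
    Tendsto (fun T => ∑ b, c b * x b * (log (y b + T * x b) - log (x b))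
      - (∑ b, c b * x b) * log T) atTop (𝓝 0) := by
  have hterm : ∀ b, Tendsto (fun T => c b * x b * (log (y b + T * x b) - log (x b) - log T))
      atTop (𝓝 0) := by
    intro b
    rcases (hx b).eq_or_lt with hb | hb
    · simp [← hb]
    have hlim := ((tendsto_log_comp_add_sub_log (y b)).comp
      (tendsto_id.atTop_mul_const hb)).const_mul (c b * x b)
    rw [mul_zero] at hlim
    refine hlim.congr' ?_
    filter_upwards [eventually_gt_atTop 0] with T hT
    rw [Function.comp_apply, id, log_mul hT.ne' hb.ne', add_comm (y b)]
    ring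
  simpa [sum_mul, ← sum_sub_distrib, mul_sub] using tendsto_finsetSum univ fun b _ => hterm b

/-- `G(T) = Σ c x (log (y + T x) - log x)` has derivative `Σ c x² / (y + T x)` and
`G(T) - (Σ c x) log T → 0`, so `G - G'` is monotone on `[0, ∞)` with limit `0`. -/
theorem sum_mul_log_sub_le_of_forall_resolvent_le (hx : ∀ b, 0 ≤ x b) (hy : ∀ b, 0 < y b)
    (hx' : ∀ i, 0 ≤ x' i) (hy' : ∀ i, 0 < y' i) (hmass : ∑ i, c' i * x' i = ∑ b, c b * x b)
    (hres : ∀ s, 0 ≤ s →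
      ∑ i, c' i * x' i ^ 2 / (y' i + s * x' i) ≤ ∑ b, c b * x b ^ 2 / (y b + s * x b)) :
    ∑ i, c' i * x' i * (log (x' i) - log (y' i)) ≤ ∑ b, c b * x b * (log (x b) - log (y b)) := by
  set G := fun T => ∑ b, c b * x b * (log (y b + T * x b) - log (x b))
  set G' := fun T => ∑ i, c' i * x' i * (log (y' i + T * x' i) - log (x' i))
  have hderiv : ∀ T, 0 ≤ T → HasDerivAt (G - G') (∑ b, c b * x b ^ 2 / (y b + T * x b) -
      ∑ i, c' i * x' i ^ 2 / (y' i + T * x' i)) T := fun T hT =>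
    (hasDerivAt_sum_mul_log_add_mul hx hy hT).sub (hasDerivAt_sum_mul_log_add_mul hx' hy' hT)
  have hmono : MonotoneOn (G - G') (Set.Ici 0) := by
    refine monotoneOn_of_deriv_nonneg (convex_Ici 0)
      (fun T hT => (hderiv T hT).continuousAt.continuousWithinAt)
      (fun T hT => (hderiv T (interior_subset hT)).differentiableAt.differentiableWithinAt)
      fun T hT => ?_
    rw [(hderiv T (interior_subset hT)).deriv, sub_nonneg]
    exact hres T (interior_subset hT)
  have hlim : Tendsto (G - G') atTop (𝓝 0) := by
    have := (tendsto_sum_mul_log_add_mul_sub_log (c := c) (y := y) hx).sub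
      (tendsto_sum_mul_log_add_mul_sub_log (c := c') (y := y') hx')
    rw [sub_zero, hmass] at this
    exact this.congr fun T => by simp only [Pi.sub_apply, G, G']; ring
  have hG0 : (G - G') 0 ≤ 0 :=
    ge_of_tendsto hlim (eventually_atTop.mpr ⟨0, fun T hT => hmono Set.self_mem_Ici hT hT⟩)
  simp only [Pi.sub_apply, G, G', zero_mul, add_zero, sub_nonpos] at hG0
  simp only [mul_sub, sum_sub_distrib] at hG0 ⊢
  linarith

end Resolvent

open Matrix ComplexOrder

section Spectral

variable {d : Type*} [Fintype d] [DecidableEq d]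

noncomputable def conjDiagonal (U : Matrix d d ℂ) (a : d → ℝ) : Matrix d d ℂ :=
  U * diagonal (fun i => (a i : ℂ)) * star U

/-- `diagReInBasis U X i = ⟨u_i|X|u_i⟩` for the columns `u_i` of `U`. -/
noncomputable def diagReInBasis (U X : Matrix d d ℂ) (i : d) : ℝ := ((star U * X * U) i i).re

theorem trace_mul_diagonal_mul_mul {R : Type*} [CommSemiring R] (V W X : Matrix d d R)
    (a : d → R) : (V * diagonal a * W * X).trace = ∑ i, a i * (W * X * V) i i := by
  rw [Matrix.mul_assoc, Matrix.mul_assoc, trace_mul_comm]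
  simp only [trace, Matrix.diag, Matrix.mul_assoc, diagonal_mul]

theorem re_mul_diagonal_mul_star_apply_self (Y : Matrix d d ℂ) (b : d → ℝ) (k : d) :
    ((Y * diagonal (fun j => (b j : ℂ)) * star Y) k k).re = ∑ j, b j * ‖Y k j‖ ^ 2 := by
  simp only [mul_apply, diagonal_apply, star_apply, mul_ite, mul_zero, sum_ite_eq', mem_univ,
    if_true, Complex.re_sum]
  refine sum_congr rfl fun j _ => ?_
  rw [mul_right_comm, RCLike.star_def, Complex.mul_conj, Complex.normSq_eq_norm_sq]
  norm_cast
  ring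

theorem re_mul_star_apply_self (Y : Matrix d d ℂ) (k : d) :
    ((Y * star Y) k k).re = ∑ j, ‖Y k j‖ ^ 2 := by
  simpa using re_mul_diagonal_mul_star_apply_self Y 1 k

theorem re_star_mul_apply_self (Y : Matrix d d ℂ) (k : d) :
    ((star Y * Y) k k).re = ∑ j, ‖Y j k‖ ^ 2 := by
  simpa using re_mul_star_apply_self (star Y) k

theorem sum_norm_sq_apply_eq_one {U : Matrix d d ℂ} (hU : U ∈ unitaryGroup d ℂ) (k : d) :
    ∑ j, ‖U k j‖ ^ 2 = 1 := by
  simpa [Unitary.mul_star_self_of_mem hU] using (re_mul_star_apply_self U k).symm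

theorem star_conjDiagonal (U : Matrix d d ℂ) (a : d → ℝ) :
    star (conjDiagonal U a) = conjDiagonal U a := by
  simp [conjDiagonal, star_mul, Matrix.mul_assoc, star_eq_conjTranspose, diagonal_conjTranspose,
    Pi.star_def]

theorem conjDiagonal_mul_conjDiagonal {U : Matrix d d ℂ} (hU : U ∈ unitaryGroup d ℂ)
    (a b : d → ℝ) : conjDiagonal U a * conjDiagonal U b = conjDiagonal U (a * b) := by
  simp only [conjDiagonal, Matrix.mul_assoc]
  rw [← Matrix.mul_assoc (star U) U, Unitary.star_mul_self_of_mem hU, Matrix.one_mul,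
    ← Matrix.mul_assoc (diagonal _), diagonal_mul_diagonal]
  simp

theorem re_trace_conjDiagonal_mul (U X : Matrix d d ℂ) (a : d → ℝ) :
    (conjDiagonal U a * X).trace.re = ∑ i, a i * diagReInBasis U X i := by
  simp only [conjDiagonal, trace_mul_diagonal_mul_mul, Complex.re_sum, Complex.re_ofReal_mul,
    diagReInBasis]

theorem re_trace_mul_conjDiagonal (U X : Matrix d d ℂ) (a : d → ℝ) :
    (X * conjDiagonal U a).trace.re = ∑ i, diagReInBasis U X i * a i := by
  rw [trace_mul_comm, re_trace_conjDiagonal_mul]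
  exact sum_congr rfl fun i _ => mul_comm _ _

theorem re_trace_conjDiagonal_mul_conjDiagonal (W Q : Matrix d d ℂ) (a b : d → ℝ) :
    (conjDiagonal W a * conjDiagonal Q b).trace.re =
      ∑ k, ∑ j, ‖(star W * Q) k j‖ ^ 2 * (a k * b j) := by
  rw [re_trace_conjDiagonal_mul]
  refine sum_congr rfl fun k _ => ?_
  rw [diagReInBasis, show star W * conjDiagonal Q b * W
      = (star W * Q) * diagonal (fun j => (b j : ℂ)) * star (star W * Q) by
    simp only [conjDiagonal, star_mul, star_star, Matrix.mul_assoc],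
    re_mul_diagonal_mul_star_apply_self, mul_sum]
  exact sum_congr rfl fun j _ => by ring

theorem diagReInBasis_conjDiagonal {U : Matrix d d ℂ} (hU : U ∈ unitaryGroup d ℂ) (a : d → ℝ) :
    diagReInBasis U (conjDiagonal U a) = a := by
  funext i
  have hUU := Unitary.star_mul_self_of_mem hU
  rw [diagReInBasis, conjDiagonal, ← Matrix.mul_assoc, ← Matrix.mul_assoc, hUU, Matrix.one_mul,
    Matrix.mul_assoc, hUU, Matrix.mul_one, diagonal_apply_eq, Complex.ofReal_re]

theorem exp_smul_conjDiagonal {U : Matrix d d ℂ} (hU : U ∈ unitaryGroup d ℂ) (a : d → ℝ)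
    (t : ℝ) : NormedSpace.exp ((t : ℂ) • conjDiagonal U a) =
      conjDiagonal U (fun i => Real.exp (t * a i)) := by
  have hinv : U⁻¹ = star U := inv_eq_left_inv (Unitary.star_mul_self_of_mem hU)
  have hunit : IsUnit U := (Unitary.toUnits ⟨U, hU⟩).isUnit
  rw [conjDiagonal, conjDiagonal, ← Matrix.smul_mul, ← Matrix.mul_smul, ← diagonal_smul, ← hinv,
    exp_conj _ _ hunit, exp_diagonal]
  congr 3
  funext i
  simp [Complex.ofReal_exp, Complex.exp_eq_exp_ℂ]

theorem Matrix.IsHermitian.cfc_eq_conjDiagonal {A : Matrix d d ℂ} (hA : A.IsHermitian)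
    (f : ℝ → ℝ) : cfc f A = conjDiagonal hA.eigenvectorUnitary (f ∘ hA.eigenvalues) := by
  rw [hA.cfc_eq]
  rfl

theorem Matrix.IsHermitian.eq_conjDiagonal {A : Matrix d d ℂ} (hA : A.IsHermitian) :
    A = conjDiagonal hA.eigenvectorUnitary hA.eigenvalues := by
  conv_lhs => rw [← cfc_id ℝ A hA.isSelfAdjoint, hA.cfc_eq_conjDiagonal]
  rfl

theorem sum_diagReInBasis {U : Matrix d d ℂ} (hU : U ∈ unitaryGroup d ℂ) (X : Matrix d d ℂ) :
    ∑ i, diagReInBasis U X i = X.trace.re := by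
  calc ∑ i, diagReInBasis U X i = (star U * X * U).trace.re := by
        simp only [diagReInBasis, trace, Matrix.diag, Complex.re_sum]
    _ = X.trace.re := by rw [trace_mul_cycle, Unitary.mul_star_self_of_mem hU, Matrix.one_mul]

omit [DecidableEq d] in
theorem Matrix.PosSemidef.diagReInBasis_nonneg {X : Matrix d d ℂ} (hX : X.PosSemidef)
    (U : Matrix d d ℂ) (i : d) : 0 ≤ diagReInBasis U X i :=
  (Complex.nonneg_iff.mp (hX.conjTranspose_mul_mul_same U).diag_nonneg).1

theorem Matrix.PosDef.diagReInBasis_pos {X : Matrix d d ℂ} (hX : X.PosDef)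
    {U : Matrix d d ℂ} (hU : U ∈ unitaryGroup d ℂ) (i : d) : 0 < diagReInBasis U X i :=
  (Complex.pos_iff.mp
    (((Unitary.toUnits ⟨U, hU⟩).isUnit.posDef_star_left_conjugate_iff.mpr hX).diag_pos)).1

theorem two_mul_re_mul_sub_le {w : ℝ} (hw : 0 < w) (a : ℝ) (m n : ℂ) :
    2 * a * (m * n).re - w * ‖n‖ ^ 2 ≤ ‖m‖ ^ 2 * a ^ 2 / w := by
  rw [le_div_iff₀ hw]
  simp only [Complex.sq_norm, Complex.normSq_apply, Complex.mul_re]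
  nlinarith [sq_nonneg (w * n.re - a * m.re), sq_nonneg (w * n.im + a * m.im)]

/-- In the eigenbases, with `X = Q* D W`, the left side is `Σ 2 ν_k Re(M_kj X_jk) - w_kj |X_jk|²`
(`M = W* Q`, `w_kj = g_j + s ν_k`); each term is at most `|M_kj|² ν_k² / w_kj`. -/
theorem re_trace_quadratic_le {Q W ρ σ : Matrix d d ℂ}
    (hQ : Q ∈ unitaryGroup d ℂ) (hW : W ∈ unitaryGroup d ℂ) {g ν : d → ℝ}
    (hg : ∀ j, 0 < g j) (hν : ∀ k, 0 ≤ ν k) (hσ : σ = conjDiagonal Q g)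
    (hρ : ρ = conjDiagonal W ν) {s : ℝ} (hs : 0 ≤ s) (D : Matrix d d ℂ) :
    2 * (D * ρ).trace.re - (star D * σ * D).trace.re - s * (star D * D * ρ).trace.re ≤
      ∑ k, ∑ j, ‖(star W * Q) k j‖ ^ 2 * ν k ^ 2 / (g j + s * ν k) := by
  set X := star Q * D * W
  have hQQ := Unitary.mul_star_self_of_mem hQ
  have hWW := Unitary.mul_star_self_of_mem hW
  have hlin : (D * ρ).trace.re = ∑ k, ∑ j, ν k * ((star W * Q) k j * X j k).re := by
    rw [trace_mul_comm, hρ, re_trace_conjDiagonal_mul]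
    refine sum_congr rfl fun k _ => ?_
    rw [diagReInBasis, show star W * D * W = star W * Q * X by
      simp only [X, ← Matrix.mul_assoc, Matrix.mul_assoc (star W) Q, hQQ, Matrix.mul_one],
      mul_apply, Complex.re_sum, mul_sum]
  have hσD : (star D * σ * D).trace.re = ∑ j, ∑ k, g j * ‖X j k‖ ^ 2 := by
    rw [trace_mul_cycle, trace_mul_comm, hσ, re_trace_conjDiagonal_mul]
    refine sum_congr rfl fun j _ => ?_
    rw [diagReInBasis, show star Q * (D * star D) * Q = X * star X by
      simp only [X, star_mul, star_star, ← Matrix.mul_assoc, Matrix.mul_assoc _ W, hWW,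
        Matrix.mul_one],
      re_mul_star_apply_self, mul_sum]
  have hρD : (star D * D * ρ).trace.re = ∑ k, ∑ j, ν k * ‖X j k‖ ^ 2 := by
    rw [trace_mul_comm, hρ, re_trace_conjDiagonal_mul]
    refine sum_congr rfl fun k _ => ?_
    rw [diagReInBasis, show star W * (star D * D) * W = star X * X by
      simp only [X, star_mul, star_star, ← Matrix.mul_assoc, Matrix.mul_assoc _ Q, hQQ,
        Matrix.mul_one],
      re_star_mul_apply_self, mul_sum]
  rw [hlin, hσD, hρD, sum_comm (f := fun j k => g j * ‖X j k‖ ^ 2), mul_sum, mul_sum,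
    ← sum_sub_distrib, ← sum_sub_distrib]
  refine sum_le_sum fun k _ => ?_
  rw [mul_sum, mul_sum, ← sum_sub_distrib, ← sum_sub_distrib]
  refine sum_le_sum fun j _ => ?_
  have hw : 0 < g j + s * ν k := add_pos_of_pos_of_nonneg (hg j) (mul_nonneg hs (hν k))
  calc 2 * (ν k * ((star W * Q) k j * X j k).re) - g j * ‖X j k‖ ^ 2 - s * (ν k * ‖X j k‖ ^ 2)
      = 2 * ν k * ((star W * Q) k j * X j k).re - (g j + s * ν k) * ‖X j k‖ ^ 2 := by ring
    _ ≤ _ := two_mul_re_mul_sub_le hw _ _ _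

theorem sum_sq_div_diagReInBasis_le {U Q W ρ σ : Matrix d d ℂ} (hU : U ∈ unitaryGroup d ℂ)
    (hQ : Q ∈ unitaryGroup d ℂ) (hW : W ∈ unitaryGroup d ℂ) {g ν : d → ℝ}
    (hg : ∀ j, 0 < g j) (hν : ∀ k, 0 ≤ ν k) (hσ : σ = conjDiagonal Q g)
    (hρ : ρ = conjDiagonal W ν) {s : ℝ} (hs : 0 ≤ s) :
    ∑ i, diagReInBasis U ρ i ^ 2 / (diagReInBasis U σ i + s * diagReInBasis U ρ i) ≤
      ∑ k, ∑ j, ‖(star W * Q) k j‖ ^ 2 * ν k ^ 2 / (g j + s * ν k) := by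
  set q := diagReInBasis U ρ
  set p := diagReInBasis U σ
  set r := fun i => q i / (p i + s * q i)
  have hquad := re_trace_quadratic_le hQ hW hg hν hσ hρ hs (conjDiagonal U r)
  rw [re_trace_conjDiagonal_mul, star_conjDiagonal, trace_mul_cycle,
    conjDiagonal_mul_conjDiagonal hU, re_trace_conjDiagonal_mul, re_trace_conjDiagonal_mul] at hquad
  refine le_of_eq_of_le ?_ hquad
  rw [mul_sum, mul_sum, ← sum_sub_distrib, ← sum_sub_distrib]
  refine sum_congr rfl fun i _ => ?_
  -- `q²/w = max_r (2 r q - r² w)`, attained at `r = q / w` (also when `w = 0`).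
  have hopt : ∀ w : ℝ, q i ^ 2 / w = 2 * (q i / w) * q i - (q i / w) ^ 2 * w := fun w => by
    rcases eq_or_ne w 0 with rfl | hw
    · simp
    field_simp
    ring
  change q i ^ 2 / (p i + s * q i) = 2 * (r i * q i) - r i * r i * p i - s * (r i * r i * q i)
  rw [hopt]
  ring

theorem Matrix.IsHermitian.re_trace_mul_cfc_log_sub_eq_sum {ρ σ : Matrix d d ℂ}
    (hρ : ρ.IsHermitian) (hσ : σ.IsHermitian) :
    ((ρ * cfc log ρ).trace - (ρ * cfc log σ).trace).re =
      ∑ b : d × d,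
        ‖(star (hρ.eigenvectorUnitary : Matrix d d ℂ) * hσ.eigenvectorUnitary) b.1 b.2‖ ^ 2 *
          hρ.eigenvalues b.1 * (log (hρ.eigenvalues b.1) - log (hσ.eigenvalues b.2)) := by
  set W := (hρ.eigenvectorUnitary : Matrix d d ℂ)
  set ν := hρ.eigenvalues
  have hW : W ∈ unitaryGroup d ℂ := hρ.eigenvectorUnitary.2
  have hrows : ∀ k, ∑ j, ‖(star W * hσ.eigenvectorUnitary) k j‖ ^ 2 = 1 :=
    sum_norm_sq_apply_eq_one (mul_mem (Unitary.star_mem hW) hσ.eigenvectorUnitary.2)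
  have hent : ((ρ * cfc log ρ).trace).re = ∑ k, ν k * log (ν k) := by
    rw [hρ.cfc_eq_conjDiagonal]
    nth_rw 1 [hρ.eq_conjDiagonal]
    rw [re_trace_conjDiagonal_mul, diagReInBasis_conjDiagonal hW]
    rfl
  rw [Complex.sub_re, hent, hσ.cfc_eq_conjDiagonal, hρ.eq_conjDiagonal,
    re_trace_conjDiagonal_mul_conjDiagonal, Fintype.sum_prod_type, ← sum_sub_distrib]
  refine sum_congr rfl fun k _ => ?_
  rw [← one_mul (ν k * _), ← hrows k, sum_mul, ← sum_sub_distrib]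
  exact sum_congr rfl fun j _ => by simp only [Function.comp_apply]; ring

theorem sum_mul_log_sub_le_re_relEntropy {ρ σ U : Matrix d d ℂ} (hρ : ρ.PosSemidef)
    (hσ : σ.PosDef) (hU : U ∈ unitaryGroup d ℂ) :
    ∑ i, diagReInBasis U ρ i * (log (diagReInBasis U ρ i) - log (diagReInBasis U σ i)) ≤
      ((ρ * cfc log ρ).trace - (ρ * cfc log σ).trace).re := by
  set W := (hρ.1.eigenvectorUnitary : Matrix d d ℂ)
  set ν := hρ.1.eigenvalues
  set Q := (hσ.1.eigenvectorUnitary : Matrix d d ℂ)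
  set g := hσ.1.eigenvalues
  have hW : W ∈ unitaryGroup d ℂ := hρ.1.eigenvectorUnitary.2
  have hQ : Q ∈ unitaryGroup d ℂ := hσ.1.eigenvectorUnitary.2
  have hrows : ∀ k, ∑ j, ‖(star W * Q) k j‖ ^ 2 = 1 :=
    sum_norm_sq_apply_eq_one (mul_mem (Unitary.star_mem hW) hQ)
  have hρW : ρ = conjDiagonal W ν := hρ.1.eq_conjDiagonal
  have hmass : ∑ i, 1 * diagReInBasis U ρ i =
      ∑ b : d × d, ‖(star W * Q) b.1 b.2‖ ^ 2 * ν b.1 := by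
    simp_rw [one_mul, sum_diagReInBasis hU, Fintype.sum_prod_type, ← sum_mul, hrows, one_mul,
      hρ.1.trace_eq_sum_eigenvalues, Complex.re_sum]
    rfl
  have := sum_mul_log_sub_le_of_forall_resolvent_le
    (c := fun b : d × d => ‖(star W * Q) b.1 b.2‖ ^ 2) (x := fun b => ν b.1) (y := fun b => g b.2)
    (c' := fun _ => 1) (fun b => hρ.eigenvalues_nonneg b.1) (fun b => hσ.eigenvalues_pos b.2)
    (hρ.diagReInBasis_nonneg U) (hσ.diagReInBasis_pos hU) hmass fun s hs => by
      simpa only [one_mul, Fintype.sum_prod_type] using sum_sq_div_diagReInBasis_le hU hQ hW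
        hσ.eigenvalues_pos hρ.eigenvalues_nonneg hσ.1.eq_conjDiagonal hρW hs
  rw [hρ.1.re_trace_mul_cfc_log_sub_eq_sum hσ.1]
  simpa only [one_mul] using this

end Spectral

theorem isHermitian_sub_trace_mul_smul_one {d : Type*} [Fintype d] [DecidableEq d]
    {O γ : Matrix d d ℂ} (hO : O.IsHermitian) (hγ : γ.IsHermitian) :
    (O - (O * γ).trace • 1).IsHermitian := by
  have hc : IsSelfAdjoint (O * γ).trace := by
    rw [IsSelfAdjoint, ← trace_conjTranspose, conjTranspose_mul, hO.eq, hγ.eq, trace_mul_comm]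
  exact hO.isSelfAdjoint.sub (hc.smul (.one _))

theorem trace_mul_sub_trace_mul_smul_one {d : Type*} [Fintype d] [DecidableEq d]
    {γ₀ γ₁ : Matrix d d ℂ} (hγ₁tr : γ₁.trace = 1) (O : Matrix d d ℂ) :
    (γ₁ * (O - (O * γ₀).trace • 1)).trace = (γ₁ * O).trace - (γ₀ * O).trace := by
  rw [Matrix.mul_sub, trace_sub, Matrix.mul_smul, Matrix.mul_one, trace_smul, hγ₁tr, smul_eq_mul,
    mul_one, trace_mul_comm O]

theorem subgaussian_qfri_general {d : Type*} [Fintype d] [DecidableEq d]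
    (γ₀ γ₁ O : Matrix d d ℂ)
    (hγ₀ : γ₀.PosDef)
    (hγ₁ : γ₁.PosSemidef) (hγ₁tr : γ₁.trace = 1)
    (hO : O.IsHermitian)
    (Oc : Matrix d d ℂ) (hOc : Oc = O - ((O * γ₀).trace) • 1)
    (σ : ℝ) (hσ : 0 ≤ σ)
    (hsub : ∀ t : ℝ, ((γ₀ * NormedSpace.exp ((t : ℂ) • Oc)).trace).re
      ≤ Real.exp (σ ^ 2 * t ^ 2 / 2)) :
    |((γ₁ * O).trace).re - ((γ₀ * O).trace).re| ≤
      σ * Real.sqrt (2 * ((γ₁ * cfc Real.log γ₁).trace - (γ₁ * cfc Real.log γ₀).trace).re) := by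
  have hOcH : Oc.IsHermitian := hOc ▸ isHermitian_sub_trace_mul_smul_one hO hγ₀.1
  set U := (hOcH.eigenvectorUnitary : Matrix d d ℂ)
  have hU : U ∈ unitaryGroup d ℂ := hOcH.eigenvectorUnitary.2
  set o := hOcH.eigenvalues
  have hOcU : Oc = conjDiagonal U o := hOcH.eq_conjDiagonal
  have hmean : ((γ₁ * O).trace).re - ((γ₀ * O).trace).re = ∑ i, diagReInBasis U γ₁ i * o i := by
    rw [← Complex.sub_re, ← trace_mul_sub_trace_mul_smul_one hγ₁tr, ← hOc, hOcU,
      re_trace_mul_conjDiagonal]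
  have hmgf : ∀ t : ℝ, ∑ i, diagReInBasis U γ₀ i * Real.exp (t * o i) ≤
      Real.exp (σ ^ 2 * t ^ 2 / 2) := fun t => le_of_eq_of_le
    (by rw [hOcU, exp_smul_conjDiagonal hU, re_trace_mul_conjDiagonal]) (hsub t)
  rw [hmean]
  calc _ ≤ σ * √(2 * ∑ i, diagReInBasis U γ₁ i *
        (log (diagReInBasis U γ₁ i) - log (diagReInBasis U γ₀ i))) :=
        abs_sum_mul_le_mul_sqrt_of_subGaussian hσ (hγ₁.diagReInBasis_nonneg U)
          (by rw [sum_diagReInBasis hU, hγ₁tr, Complex.one_re]) (hγ₀.diagReInBasis_pos hU) hmgf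
    _ ≤ _ := by
        gcongr
        exact sum_mul_log_sub_le_re_relEntropy hγ₁ hγ₀ hU

/-- Sub-Gaussian quantum fluctuation-response inequality. The sub-Gaussian
hypothesis on the random variable induced by `O_c` in its eigenbasis under the
probability distribution `p_i = ⟨i|γ₀|i⟩` is expressed equivalently as a bound
on `Tr(γ₀ exp(t O_c))`, which equals its moment generating function. -/
theorem subgaussian_qfri {d : Type*} [Fintype d] [DecidableEq d]
    (γ₀ γ₁ O : Matrix d d ℂ)
    (hγ₀ : γ₀.PosDef) (hγ₀tr : γ₀.trace = 1)
    (hγ₁ : γ₁.PosSemidef) (hγ₁tr : γ₁.trace = 1)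
    (hO : O.IsHermitian)
    (Oc : Matrix d d ℂ) (hOc : Oc = O - ((O * γ₀).trace) • 1)
    (σ : ℝ) (hσ : 0 ≤ σ)
    (hsub : ∀ t : ℝ, ((γ₀ * NormedSpace.exp ((t : ℂ) • Oc)).trace).re
      ≤ Real.exp (σ ^ 2 * t ^ 2 / 2)) :
    |((γ₁ * O).trace).re - ((γ₀ * O).trace).re| ≤
      σ * Real.sqrt (2 * ((γ₁ * cfc Real.log γ₁).trace - (γ₁ * cfc Real.log γ₀).trace).re) :=
  subgaussian_qfri_general γ₀ γ₁ O hγ₀ hγ₁ hγ₁tr hO Oc hOc σ hσ hsub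
end

section
/- Let P and Q be probability distributions on a finite set with Q(x) > 0 for all x, and let O be a real-valued function on the set with E_P[O] denoting its mean under P. Set O_c = O − E_Q[O]. Then for every s > 0, |E_P[O] − E_Q[O]| ≤ (1/s)·[ln E_Q[exp(ξ s O_c)] + KL(P‖Q)], where ξ = sign(E_P[O] − E_Q[O]). -/
lemma sign_mul_eq_abs (r : ℝ) : Real.sign r * r = |r| := by
  rcases lt_trichotomy r 0 with h | h | h
  · rw [Real.sign_of_neg h, abs_of_neg h]; ring
  · simp [h]
  · rw [Real.sign_of_pos h, abs_of_pos h]; ring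

lemma gibbs {X : Type*} [Fintype X] (P R : X → ℝ)
    (hP : ∀ x, 0 ≤ P x) (hR : ∀ x, 0 < R x)
    (hPs : ∑ x, P x = 1) (hRs : ∑ x, R x = 1) :
    0 ≤ ∑ x, P x * Real.log (P x / R x) := by
  have key : ∀ x, P x - R x ≤ P x * Real.log (P x / R x) := by
    intro x
    rcases eq_or_lt_of_le (hP x) with h0 | h0
    · rw [← h0]; simp [(hR x).le]
    · have hlog : Real.log (R x / P x) ≤ R x / P x - 1 :=
        Real.log_le_sub_one_of_pos (div_pos (hR x) h0)
      have : 1 - R x / P x ≤ Real.log (P x / R x) := by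
        rw [Real.log_div (hR x).ne' h0.ne'] at hlog
        rw [Real.log_div h0.ne' (hR x).ne']
        linarith
      have := mul_le_mul_of_nonneg_left this (hP x)
      calc P x - R x = P x * (1 - R x / P x) := by field_simp
        _ ≤ P x * Real.log (P x / R x) := this
  calc (0:ℝ) = ∑ x, (P x - R x) := by rw [Finset.sum_sub_distrib, hPs, hRs]; ring
    _ ≤ _ := Finset.sum_le_sum fun x _ => key x

/-- Classical fluctuation-response inequality on a finite set. -/
theorem classical_fri {X : Type*} [Fintype X]
    (P Q : X → ℝ)
    (hQpos : ∀ x, 0 < Q x) (hQsum : ∑ x, Q x = 1)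
    (hPnonneg : ∀ x, 0 ≤ P x) (hPsum : ∑ x, P x = 1)
    (O : X → ℝ)
    (ξ : ℝ) (hξ : ξ = Real.sign ((∑ x, P x * O x) - ∑ x, Q x * O x))
    (s : ℝ) (hs : 0 < s) :
    |(∑ x, P x * O x) - ∑ x, Q x * O x| ≤
      (1 / s) *
        (Real.log (∑ x, Q x * Real.exp (ξ * s * (O x - ∑ y, Q y * O y)))
          + ∑ x, P x * Real.log (P x / Q x)) := by
  rcases isEmpty_or_nonempty X with hX | hX
  · simp
  set μ := ∑ y, Q y * O y with hμ
  set f : X → ℝ := fun x => ξ * s * (O x - μ) with hf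
  set Z : ℝ := ∑ x, Q x * Real.exp (f x) with hZ
  have hZpos : 0 < Z := Finset.sum_pos (fun x _ => mul_pos (hQpos x) (Real.exp_pos _))
      ⟨Classical.arbitrary X, Finset.mem_univ _⟩
  set R : X → ℝ := fun x => Q x * Real.exp (f x) / Z with hRdef
  have hRpos : ∀ x, 0 < R x := fun x => div_pos (mul_pos (hQpos x) (Real.exp_pos _)) hZpos
  have hRsum : ∑ x, R x = 1 := by
    simp only [hRdef, ← Finset.sum_div, ← hZ]
    exact div_self hZpos.ne'
  have term_eq : ∀ x, P x * Real.log (P x / R x)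
      = P x * Real.log (P x / Q x) - P x * f x + P x * Real.log Z := by
    intro x
    rcases eq_or_lt_of_le (hPnonneg x) with h0 | h0
    · simp [← h0]
    · have hlogR : Real.log (R x) = Real.log (Q x) + f x - Real.log Z := by
        rw [hRdef]
        rw [Real.log_div (mul_pos (hQpos x) (Real.exp_pos _)).ne' hZpos.ne',
          Real.log_mul (hQpos x).ne' (Real.exp_pos _).ne', Real.log_exp]
      rw [Real.log_div h0.ne' (hRpos x).ne', Real.log_div h0.ne' (hQpos x).ne', hlogR]
      ring
  have hDV : ∑ x, P x * f x ≤ Real.log Z + ∑ x, P x * Real.log (P x / Q x) := by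
    have h := gibbs P R hPnonneg hRpos hPsum hRsum
    have hsum : ∑ x, P x * Real.log (P x / R x)
        = (∑ x, P x * Real.log (P x / Q x)) - (∑ x, P x * f x)
          + (∑ x, P x) * Real.log Z := by
      rw [Finset.sum_mul]
      rw [show (∑ x, P x * Real.log (P x / R x)) = ∑ x, (P x * Real.log (P x / Q x)
          - P x * f x + P x * Real.log Z) from Finset.sum_congr rfl fun x _ => term_eq x]
      rw [Finset.sum_add_distrib, Finset.sum_sub_distrib]
    rw [hsum, hPsum, one_mul] at h
    linarith
  have hEf : ∑ x, P x * f x = s * |(∑ x, P x * O x) - μ| := by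
    have : ∑ x, P x * f x = ξ * s * ((∑ x, P x * O x) - μ) := by
      simp only [hf]
      rw [Finset.sum_congr rfl (fun x _ => by ring :
        ∀ x ∈ Finset.univ, P x * (ξ * s * (O x - μ)) = ξ * s * (P x * O x) - ξ * s * μ * P x)]
      rw [Finset.sum_sub_distrib, ← Finset.mul_sum, ← Finset.mul_sum, hPsum]
      ring
    rw [this, hξ]
    rw [show Real.sign ((∑ x, P x * O x) - μ) * s * ((∑ x, P x * O x) - μ)
        = s * (Real.sign ((∑ x, P x * O x) - μ) * ((∑ x, P x * O x) - μ)) by ring,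
      sign_mul_eq_abs]
  rw [hEf] at hDV
  rw [one_div, inv_mul_eq_div, le_div_iff₀ hs]
  linarith [hDV]
end
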